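/- arXiv:1505.05055 — 2 statements merged into one kernel-verified Lean document; each statement's English description precedes it below -/
import Mathlib

section
/- In a tree that is uniformly refined to level L, a contiguous segment of the Morton curve that begins with the first level-L quadrant creates exactly one face-connected subdomain, no matter where it ends. Precisely: for every b with 0 ≤ b < 2^{dL}, the set of level-L quadrants {Q : 0 ≤ Q ≤ b} is face-connected. -/
/-! In Morton order a level-`(L+1)` quadrant is `Q = 2^d H + c`, where `H` is its level-`L`
parent and `c < 2^d` its child index, and `Q_r = 2 H_r + (bit r-1 of c)`. Hence every `Q ≠ 0` has a
face-neighbour `Q' < Q` one step lower in a single coordinate: if `c ≠ 0`, clear a set bit of `c`;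
if `c = 0`, take such a neighbour `H'` of `H` (lower in coordinate `r`) and its child
`2^d H' + 2^(r-1)`, which touches `Q`. Descending this way links every quadrant of `[0, b]` to `0`. -/

/-- The `r`-th coordinate (1 ≤ r ≤ d) of a level-`L` quadrant `Q` in dimension `d`. -/
def mortonCoord (d L r Q : ℕ) : ℕ :=
  ∑ ℓ ∈ Finset.range L, (Q / 2 ^ (ℓ * d + (r - 1)) % 2) * 2 ^ ℓ

/-- Two level-`L` quadrants are face-neighbors: they differ by exactly one in exactly
one coordinate and agree in all other coordinates. -/
def MortonFaceNbr (d L Q Q' : ℕ) : Prop :=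
  Q ≠ Q' ∧ ∃ r, 1 ≤ r ∧ r ≤ d ∧
    ((mortonCoord d L r Q : ℤ) - (mortonCoord d L r Q' : ℤ)).natAbs = 1 ∧
    ∀ s, 1 ≤ s → s ≤ d → s ≠ r → mortonCoord d L s Q = mortonCoord d L s Q'

/-- A set of level-`L` quadrants is face-connected: the graph on `S` whose edges join
face-neighbors is connected. -/
def MortonFaceConnected (d L : ℕ) (S : Set ℕ) : Prop :=
  ∀ Q ∈ S, ∀ Q' ∈ S,
    Relation.ReflTransGen (fun a b => a ∈ S ∧ b ∈ S ∧ MortonFaceNbr d L a b) Q Q'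

/-- `S` has at most `n` face-connected components: it can be written as a union of `n`
face-connected subsets. -/
def MortonCompBound (d L : ℕ) (S : Set ℕ) (n : ℕ) : Prop :=
  ∃ f : Fin n → Set ℕ, S = ⋃ i, f i ∧ ∀ i, MortonFaceConnected d L (f i)

open Finset

lemma mortonCoord_eq_sum_testBit (d L r Q : ℕ) :
    mortonCoord d L r Q = ∑ ℓ ∈ range L, (Q.testBit (ℓ * d + (r - 1))).toNat * 2 ^ ℓ := by
  simp only [mortonCoord, Nat.toNat_testBit]

lemma mortonCoord_two_pow_mul_add {d r c : ℕ} (L H : ℕ) (hr : r - 1 < d) (hc : c < 2 ^ d) :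
    mortonCoord d (L + 1) r (2 ^ d * H + c) =
      (c.testBit (r - 1)).toNat + 2 * mortonCoord d L r H := by
  simp only [mortonCoord_eq_sum_testBit, sum_range_succ', Nat.testBit_two_pow_mul_add H hc,
    mul_sum]
  rw [add_comm]
  congr 1
  · simp [hr]
  · refine sum_congr rfl fun ℓ _ => ?_
    have hℓ : (ℓ + 1) * d + (r - 1) - d = ℓ * d + (r - 1) := by
      rw [add_mul, one_mul]; omega
    rw [if_neg (by nlinarith), hℓ, pow_succ]
    ring

def MortonLowerNbr (d L r Q Q' : ℕ) : Prop :=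
  mortonCoord d L r Q = mortonCoord d L r Q' + 1 ∧
    ∀ s, 1 ≤ s → s ≤ d → s ≠ r → mortonCoord d L s Q' = mortonCoord d L s Q

lemma MortonLowerNbr.mortonFaceNbr {d L r Q Q' : ℕ} (h : MortonLowerNbr d L r Q Q')
    (hr1 : 1 ≤ r) (hrd : r ≤ d) : MortonFaceNbr d L Q Q' := by
  obtain ⟨hr, hs⟩ := h
  refine ⟨fun hQ => by simp [hQ] at hr, r, hr1, hrd, by omega,
    fun s hs1 hsd hsr => (hs s hs1 hsd hsr).symm⟩

lemma mortonLowerNbr_xor_two_pow {d t c : ℕ} (L H : ℕ) (ht : t < d) (hc : c < 2 ^ d)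
    (hct : c.testBit t) :
    MortonLowerNbr d (L + 1) (t + 1) (2 ^ d * H + c) (2 ^ d * H + (c ^^^ 2 ^ t)) := by
  have hc' : c ^^^ 2 ^ t < 2 ^ d := Nat.xor_lt_two_pow hc (Nat.pow_lt_pow_right one_lt_two ht)
  refine ⟨?_, fun s hs1 hsd hst => ?_⟩
  · rw [mortonCoord_two_pow_mul_add L H (by omega) hc,
      mortonCoord_two_pow_mul_add L H (by omega) hc']
    simp only [Nat.testBit_xor, hct, Nat.testBit_two_pow_self, add_tsub_cancel_right,
      bne_self_eq_false, Bool.toNat_true, Bool.toNat_false, zero_add]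
    ring
  · rw [mortonCoord_two_pow_mul_add L H (by omega) hc,
      mortonCoord_two_pow_mul_add L H (by omega) hc', Nat.testBit_xor,
      Nat.testBit_two_pow_of_ne (by omega), Bool.xor_false]

lemma MortonLowerNbr.two_pow_mul {d L r H H' : ℕ} (h : MortonLowerNbr d L r H H')
    (hr1 : 1 ≤ r) (hrd : r ≤ d) :
    MortonLowerNbr d (L + 1) r (2 ^ d * H) (2 ^ d * H' + 2 ^ (r - 1)) := by
  have hpow : 2 ^ (r - 1) < 2 ^ d := Nat.pow_lt_pow_right one_lt_two (by omega)
  obtain ⟨hr, hs⟩ := h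
  refine ⟨?_, fun s hs1 hsd hsr => ?_⟩
  · rw [← add_zero (2 ^ d * H), mortonCoord_two_pow_mul_add L H (by omega) (Nat.two_pow_pos d),
      mortonCoord_two_pow_mul_add L H' (by omega) hpow, hr, Nat.testBit_two_pow_self,
      Nat.zero_testBit, Bool.toNat_false, Bool.toNat_true]
    ring
  · rw [← add_zero (2 ^ d * H), mortonCoord_two_pow_mul_add L H (by omega) (Nat.two_pow_pos d),
      mortonCoord_two_pow_mul_add L H' (by omega) hpow, hs s hs1 hsd hsr,
      Nat.testBit_two_pow_of_ne (by omega), Nat.zero_testBit]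

lemma xor_two_pow_lt_of_testBit {c t : ℕ} (hct : c.testBit t) : c ^^^ 2 ^ t < c :=
  Nat.lt_of_testBit t (by simp [Nat.testBit_xor, hct]) hct
    fun j hj => by simp [Nat.testBit_xor, Nat.testBit_two_pow_of_ne hj.ne]

lemma exists_lt_mortonLowerNbr (d L : ℕ) {Q : ℕ} (hQ : 0 < Q) (hQL : Q < 2 ^ (d * L)) :
    ∃ Q' < Q, ∃ r, 1 ≤ r ∧ r ≤ d ∧ MortonLowerNbr d L r Q Q' := by
  induction L generalizing Q with
  | zero => rw [mul_zero, pow_zero] at hQL; omega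
  | succ L ih =>
    obtain ⟨H, c, hc, rfl⟩ : ∃ H c, c < 2 ^ d ∧ Q = 2 ^ d * H + c :=
      ⟨Q / 2 ^ d, Q % 2 ^ d, Nat.mod_lt _ (Nat.two_pow_pos d), (Nat.div_add_mod Q _).symm⟩
    rcases Nat.eq_zero_or_pos c with rfl | hc0
    · have hH : 0 < H := Nat.pos_of_mul_pos_left hQ
      have hHL : H < 2 ^ (d * L) := by
        rw [add_zero, mul_add_one, pow_add, mul_comm] at hQL
        exact Nat.lt_of_mul_lt_mul_right hQL
      obtain ⟨H', hH', r, hr1, hrd, h⟩ := ih hH hHL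
      refine ⟨2 ^ d * H' + 2 ^ (r - 1), ?_, r, hr1, hrd, by simpa using h.two_pow_mul hr1 hrd⟩
      have : 2 ^ (r - 1) < 2 ^ d := Nat.pow_lt_pow_right one_lt_two (by omega)
      have : 2 ^ d * (H' + 1) ≤ 2 ^ d * H := Nat.mul_le_mul_left _ hH'
      linarith
    · obtain ⟨t, hct⟩ := Nat.exists_testBit_of_ne_zero hc0.ne'
      have ht : t < d := (Nat.pow_lt_pow_iff_right one_lt_two).mp
        ((Nat.ge_two_pow_of_testBit hct).trans_lt hc)
      refine ⟨2 ^ d * H + (c ^^^ 2 ^ t), ?_, t + 1, by omega, by omega,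
        mortonLowerNbr_xor_two_pow L H ht hc hct⟩
      have := xor_two_pow_lt_of_testBit hct
      omega

lemma MortonFaceNbr.symm {d L Q Q' : ℕ} (h : MortonFaceNbr d L Q Q') : MortonFaceNbr d L Q' Q := by
  obtain ⟨hne, r, hr1, hrd, hr, hs⟩ := h
  exact ⟨hne.symm, r, hr1, hrd, by omega, fun s hs1 hsd hsr => (hs s hs1 hsd hsr).symm⟩

lemma reflTransGen_zero_of_exists_lt {R : ℕ → ℕ → Prop} {b : ℕ}
    (h : ∀ Q, 0 < Q → Q ≤ b → ∃ Q' < Q, R Q Q') (Q : ℕ) (hQ : Q ≤ b) :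
    Relation.ReflTransGen (fun x y => x ∈ Set.Iic b ∧ y ∈ Set.Iic b ∧ R x y) Q 0 := by
  induction Q using Nat.strong_induction_on with
  | _ Q ih =>
    rcases Nat.eq_zero_or_pos Q with rfl | hpos
    · exact .refl
    · obtain ⟨Q', hlt, hR⟩ := h Q hpos hQ
      exact .head ⟨hQ, hlt.le.trans hQ, hR⟩ (ih Q' hlt (hlt.le.trans hQ))

theorem morton_segment_from_first_connected_general (d L b : ℕ)
    (hb : b < 2 ^ (d * L)) :
    MortonFaceConnected d L (Set.Iic b) := by
  have : Std.Symm (fun x y => x ∈ Set.Iic b ∧ y ∈ Set.Iic b ∧ MortonFaceNbr d L x y) :=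
    ⟨fun _ _ ⟨hx, hy, h⟩ => ⟨hy, hx, h.symm⟩⟩
  have to_zero := reflTransGen_zero_of_exists_lt (R := MortonFaceNbr d L) fun Q hQ hQb => by
    obtain ⟨Q', hlt, r, hr1, hrd, h⟩ := exists_lt_mortonLowerNbr d L hQ (hQb.trans_lt hb)
    exact ⟨Q', hlt, h.mortonFaceNbr hr1 hrd⟩
  intro Q hQ Q' hQ'
  exact (to_zero Q hQ).trans (symm (to_zero Q' hQ'))

/-- In a tree uniformly refined to level `L`, a contiguous segment of the Morton curve
beginning with the first level-`L` quadrant is face-connected, no matter where it ends. -/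
theorem morton_segment_from_first_connected (d L b : ℕ) (hd : 1 ≤ d)
    (hb : b < 2 ^ (d * L)) :
    MortonFaceConnected d L (Set.Iic b) :=
  morton_segment_from_first_connected_general d L b hb
end

section
/- Let Q^start ≤ Q^end be level-L quadrants such that the bitwise or satisfies Q OR Q^start = Q for all Q with Q^start ≤ Q ≤ Q^end. Then the interior of Y = ⋃_{Q=Q^start}^{Q^end} Ω(Q) ⊆ ℝ^d is star-shaped. -/
/-- The closed box `Ω(Q) = Π_r [2^{-L} Q_r, 2^{-L}(Q_r + 1)] ⊆ ℝ^d` occupied by the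
level-`L` quadrant `Q`. -/
def mortonOmega (d L Q : ℕ) : Set (Fin d → ℝ) :=
  {x | ∀ r : Fin d,
    (mortonCoord d L ((r : ℕ) + 1) Q : ℝ) / 2 ^ L ≤ x r ∧
    x r ≤ ((mortonCoord d L ((r : ℕ) + 1) Q : ℝ) + 1) / 2 ^ L}

/-- `A ⊆ ℝ^d` is star-shaped with respect to `p`. -/
def StarShapedWrt {d : ℕ} (A : Set (Fin d → ℝ)) (p : Fin d → ℝ) : Prop :=
  p ∈ A ∧ ∀ x ∈ A, segment ℝ p x ⊆ A

/-- `A ⊆ ℝ^d` is star-shaped with respect to some point of `A`. -/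
def StarShaped {d : ℕ} (A : Set (Fin d → ℝ)) : Prop :=
  ∃ p, StarShapedWrt A p

def bitSum (n : ℕ) (c : ℕ → ℕ) : ℕ := ∑ i ∈ Finset.range n, c i * 2 ^ i

lemma bitSum_lt {c : ℕ → ℕ} (hc : ∀ i, c i ≤ 1) (n : ℕ) : bitSum n c < 2 ^ n := by
  induction n with
  | zero => simp [bitSum]
  | succ n ih =>
    rw [bitSum, Finset.sum_range_succ, ← bitSum, pow_succ]
    have := hc n
    nlinarith [pow_pos (show 0 < 2 from by norm_num) n]

lemma mod_two_pow_succ (a n : ℕ) : a % 2 ^ (n+1) = a % 2 ^ n + (a / 2 ^ n % 2) * 2 ^ n := by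
  have hpos : 0 < 2 ^ n := pow_pos (by norm_num) n
  have hr : a % 2 ^ n < 2 ^ n := Nat.mod_lt _ hpos
  have hb : a / 2 ^ n % 2 ≤ 1 := by omega
  have key : a = 2 ^ (n+1) * (a / 2 ^ n / 2) + (a % 2 ^ n + a / 2 ^ n % 2 * 2 ^ n) := by
    have h1 := Nat.div_add_mod a (2 ^ n)
    have h2 := Nat.div_add_mod (a / 2 ^ n) 2
    calc a = 2 ^ n * (a / 2 ^ n) + a % 2 ^ n := h1.symm
      _ = 2 ^ n * (2 * (a / 2 ^ n / 2) + a / 2 ^ n % 2) + a % 2 ^ n := by rw [h2]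
      _ = _ := by ring
  conv_lhs => rw [key]
  rw [Nat.mul_add_mod]
  exact Nat.mod_eq_of_lt (by rw [pow_succ]; nlinarith)

lemma bitSum_mod (a n : ℕ) : bitSum n (fun i => a / 2 ^ i % 2) = a % 2 ^ n := by
  induction n with
  | zero => simp [bitSum, Nat.mod_one]
  | succ n ih =>
    rw [bitSum, Finset.sum_range_succ, ← bitSum, ih, mod_two_pow_succ]

lemma bitSum_eq_self {a n : ℕ} (h : a < 2 ^ n) : bitSum n (fun i => a / 2 ^ i % 2) = a := by
  rw [bitSum_mod, Nat.mod_eq_of_lt h]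

lemma bitSum_shift (c : ℕ → ℕ) (m : ℕ) :
    bitSum (m+1) c = c 0 + 2 * bitSum m (fun i => c (i+1)) := by
  rw [bitSum, Finset.sum_range_succ', bitSum]
  have : ∀ i, c (i+1) * 2 ^ (i+1) = 2 * (c (i+1) * 2 ^ i) := fun i => by ring
  simp_rw [this, ← Finset.mul_sum]
  ring

lemma bitSum_div {c : ℕ → ℕ} (hc : ∀ i, c i ≤ 1) :
    ∀ j n, j ≤ n → bitSum n c / 2 ^ j = bitSum (n - j) (fun i => c (j + i)) := by
  intro j
  induction j with
  | zero => intro n _; simp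
  | succ j ih =>
    intro n hjn
    have hj : j ≤ n := by omega
    have h1 : bitSum n c / 2 ^ (j+1) = bitSum n c / 2 ^ j / 2 := by
      rw [Nat.div_div_eq_div_mul, pow_succ]
    rw [h1, ih n hj]
    have h2 : n - j = (n - (j+1)) + 1 := by omega
    rw [h2, bitSum_shift]
    have hc0 : c (j + 0) ≤ 1 := hc _
    have : ∀ i, c (j + (i+1)) = c (j + 1 + i) := fun i => by ring_nf
    simp_rw [this]
    omega

lemma bitSum_digit {c : ℕ → ℕ} (hc : ∀ i, c i ≤ 1) {j n : ℕ} (hj : j < n) :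
    bitSum n c / 2 ^ j % 2 = c j := by
  rw [bitSum_div hc j n hj.le]
  have h2 : n - j = (n - (j+1)) + 1 := by omega
  rw [h2, bitSum_shift]
  have := hc (j + 0)
  simp only [Nat.add_zero] at this ⊢
  omega

lemma mortonCoord_eq_bitSum (d L r Q : ℕ) :
    mortonCoord d L r Q = bitSum L (fun ℓ => Q / 2 ^ (ℓ * d + (r - 1)) % 2) := rfl

lemma mortonCoord_lt (d L r Q : ℕ) : mortonCoord d L r Q < 2 ^ L := by
  rw [mortonCoord_eq_bitSum]; exact bitSum_lt (fun i => by omega) L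

/-- reindexing a sum over `range (L*d)` as a double sum -/
lemma sum_range_mul (L d : ℕ) (hd : 0 < d) (g : ℕ → ℕ) :
    ∑ i ∈ Finset.range (L * d), g i
      = ∑ ℓ ∈ Finset.range L, ∑ r ∈ Finset.range d, g (ℓ * d + r) := by
  rw [← Finset.sum_product']
  refine Finset.sum_nbij' (fun i => (i / d, i % d)) (fun p => p.1 * d + p.2) ?_ ?_ ?_ ?_ ?_
  · intro i hi
    simp only [Finset.mem_range] at hi
    simp only [Finset.mem_product, Finset.mem_range]
    exact ⟨Nat.div_lt_of_lt_mul (by rwa [mul_comm] at hi), Nat.mod_lt _ hd⟩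
  · intro p hp
    simp only [Finset.mem_product, Finset.mem_range] at hp
    simp only [Finset.mem_range]
    calc p.1 * d + p.2 < p.1 * d + d := by omega
      _ = (p.1 + 1) * d := by ring
      _ ≤ L * d := Nat.mul_le_mul_right d hp.1
  · intro i _
    have h : i / d * d + i % d = i := by rw [mul_comm]; exact Nat.div_add_mod i d
    simp [h]
  · intro p hp
    obtain ⟨ℓ, r⟩ := p
    simp only [Finset.mem_product, Finset.mem_range] at hp
    have h1 : (ℓ * d + r) / d = ℓ := by
      rw [mul_comm, Nat.mul_add_div hd, Nat.div_eq_of_lt hp.2, Nat.add_zero]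
    have h2 : (ℓ * d + r) % d = r := by
      rw [mul_comm, Nat.mul_add_mod, Nat.mod_eq_of_lt hp.2]
    simp [h1, h2]
  · intro i _
    have h : i / d * d + i % d = i := by rw [mul_comm]; exact Nat.div_add_mod i d
    simp [h]

def mEnc (d L : ℕ) (k : ℕ → ℕ) : ℕ := bitSum (L * d) (fun i => k (i % d) / 2 ^ (i / d) % 2)

lemma mEnc_digit {d L : ℕ} (hd : 0 < d) (k : ℕ → ℕ) {ℓ r : ℕ} (hℓ : ℓ < L) (hr : r < d) :
    mEnc d L k / 2 ^ (ℓ * d + r) % 2 = k r / 2 ^ ℓ % 2 := by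
  rw [mEnc, bitSum_digit (fun i => by omega)]
  · have h1 : (ℓ * d + r) / d = ℓ := by
      rw [mul_comm, Nat.mul_add_div hd, Nat.div_eq_of_lt hr, Nat.add_zero]
    have h2 : (ℓ * d + r) % d = r := by
      rw [mul_comm, Nat.mul_add_mod, Nat.mod_eq_of_lt hr]
    rw [h1, h2]
  · calc ℓ * d + r < ℓ * d + d := by omega
      _ = (ℓ + 1) * d := by ring
      _ ≤ L * d := Nat.mul_le_mul_right d hℓ

lemma mEnc_coord {d L : ℕ} (hd : 0 < d) (k : ℕ → ℕ) {r : ℕ} (hr : r < d) :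
    mortonCoord d L (r + 1) (mEnc d L k) = k r % 2 ^ L := by
  rw [mortonCoord_eq_bitSum]
  have h1 : ∀ ℓ ∈ Finset.range L, (fun ℓ => mEnc d L k / 2 ^ (ℓ * d + (r + 1 - 1)) % 2) ℓ * 2 ^ ℓ
      = (fun ℓ => k r / 2 ^ ℓ % 2) ℓ * 2 ^ ℓ := by
    intro ℓ hℓ
    simp only [Finset.mem_range] at hℓ
    simp only [Nat.add_sub_cancel]
    rw [mEnc_digit hd k hℓ hr]
  rw [bitSum, Finset.sum_congr rfl h1, ← bitSum, bitSum_mod]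

lemma mEnc_coords_self {d L Q : ℕ} (hd : 0 < d) (hQ : Q < 2 ^ (L * d)) :
    mEnc d L (fun r => mortonCoord d L (r + 1) Q) = Q := by
  rw [mEnc]
  have h1 : ∀ i ∈ Finset.range (L * d),
      (fun i => (fun r => mortonCoord d L (r + 1) Q) (i % d) / 2 ^ (i / d) % 2) i * 2 ^ i
      = (fun i => Q / 2 ^ i % 2) i * 2 ^ i := by
    intro i hi
    simp only [Finset.mem_range] at hi
    simp only []
    rw [mortonCoord_eq_bitSum, bitSum_digit (fun ℓ => by omega)
      (show i / d < L from Nat.div_lt_of_lt_mul (by rwa [mul_comm] at hi))]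
    rw [Nat.add_sub_cancel,
      show i / d * d + i % d = i from by rw [mul_comm]; exact Nat.div_add_mod i d]
  rw [bitSum, Finset.sum_congr rfl h1, ← bitSum, bitSum_mod, Nat.mod_eq_of_lt hQ]

def sprd (d L a : ℕ) : ℕ := ∑ ℓ ∈ Finset.range L, (a / 2 ^ ℓ % 2) * 2 ^ (ℓ * d)

lemma sprd_succ (d L a : ℕ) : sprd d (L + 1) a = a % 2 + 2 ^ d * sprd d L (a / 2) := by
  rw [sprd, Finset.sum_range_succ', sprd, Finset.mul_sum]
  have h : ∀ ℓ, a / 2 ^ (ℓ + 1) % 2 * 2 ^ ((ℓ + 1) * d)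
      = 2 ^ d * (a / 2 / 2 ^ ℓ % 2 * 2 ^ (ℓ * d)) := by
    intro ℓ
    rw [show a / 2 ^ (ℓ + 1) = a / 2 / 2 ^ ℓ from by
      rw [Nat.div_div_eq_div_mul, pow_succ']]
    ring
  simp_rw [h]
  simp [add_comm]

lemma sprd_strictMono {d : ℕ} (hd : 1 ≤ d) :
    ∀ L {a a' : ℕ}, a < a' → a' < 2 ^ L → sprd d L a < sprd d L a' := by
  intro L
  induction L with
  | zero => intro a a' h h'; omega
  | succ L ih =>
    intro a a' h h'
    rw [sprd_succ, sprd_succ]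
    have hdiv : a / 2 ≤ a' / 2 := Nat.div_le_div_right h.le
    have h2d : 2 ≤ 2 ^ d := by
      calc 2 = 2 ^ 1 := (pow_one 2).symm
      _ ≤ 2 ^ d := Nat.pow_le_pow_right (by norm_num) hd
    rcases eq_or_lt_of_le hdiv with heq | hlt
    · have : a % 2 < a' % 2 := by omega
      rw [heq]; omega
    · have ha' : a' / 2 < 2 ^ L := by
        have : (2:ℕ) ^ (L + 1) = 2 * 2 ^ L := by rw [pow_succ']
        omega
      have := ih hlt ha'
      have hm := Nat.mul_le_mul_left (2 ^ d) (show sprd d L (a / 2) + 1 ≤ sprd d L (a' / 2) from this)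
      have h1 : a % 2 ≤ 1 := by omega
      rw [Nat.mul_add, Nat.mul_one] at hm
      omega

lemma sprd_mono {d : ℕ} (hd : 1 ≤ d) {L a a' : ℕ} (h : a ≤ a') (h' : a' < 2 ^ L) :
    sprd d L a ≤ sprd d L a' := by
  rcases eq_or_lt_of_le h with rfl | hlt
  · exact le_refl _
  · exact (sprd_strictMono hd L hlt h').le

lemma mEnc_eq_sum_sprd {d L : ℕ} (hd : 1 ≤ d) (k : ℕ → ℕ) :
    mEnc d L k = ∑ r ∈ Finset.range d, sprd d L (k r) * 2 ^ r := by
  rw [mEnc, bitSum, sum_range_mul L d hd]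
  rw [Finset.sum_comm]
  refine Finset.sum_congr rfl ?_
  intro r hr
  simp only [Finset.mem_range] at hr
  rw [sprd, Finset.sum_mul]
  refine Finset.sum_congr rfl ?_
  intro ℓ _
  have h1 : (ℓ * d + r) / d = ℓ := by
    rw [mul_comm, Nat.mul_add_div hd, Nat.div_eq_of_lt hr, Nat.add_zero]
  have h2 : (ℓ * d + r) % d = r := by
    rw [mul_comm, Nat.mul_add_mod, Nat.mod_eq_of_lt hr]
  rw [h1, h2, pow_add]
  ring

lemma mEnc_mono {d L : ℕ} (hd : 1 ≤ d) {k k' : ℕ → ℕ}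
    (hk : ∀ r, r < d → k r ≤ k' r) (hk' : ∀ r, r < d → k' r < 2 ^ L) :
    mEnc d L k ≤ mEnc d L k' := by
  rw [mEnc_eq_sum_sprd hd, mEnc_eq_sum_sprd hd]
  refine Finset.sum_le_sum ?_
  intro r hr
  simp only [Finset.mem_range] at hr
  exact Nat.mul_le_mul_right _ (sprd_mono hd (hk r hr) (hk' r hr))

lemma digit_le_of_or {Qs Q : ℕ} (h : Q ||| Qs = Q) (i : ℕ) :
    Qs / 2 ^ i % 2 ≤ Q / 2 ^ i % 2 := by
  have h1 : (Q ||| Qs).testBit i = Q.testBit i := by rw [h]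
  rw [Nat.testBit_or] at h1
  have h2 : Qs.testBit i = true → Q.testBit i = true := by
    intro hs
    rw [hs, Bool.or_true] at h1
    exact h1.symm
  simp only [Nat.testBit_eq_decide_div_mod_eq, decide_eq_true_eq] at h2
  omega

lemma mortonCoord_le_of_or {d L r Qs Q : ℕ} (h : Q ||| Qs = Q) :
    mortonCoord d L r Qs ≤ mortonCoord d L r Q := by
  refine Finset.sum_le_sum ?_
  intro ℓ _
  exact Nat.mul_le_mul_right _ (digit_le_of_or h _)

lemma star_interior {E : Type*} [AddCommGroup E] [Module ℝ E] [TopologicalSpace E]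
    [ContinuousSMul ℝ E] [ContinuousAdd E] {A : Set E} {p : E}
    (hp : p ∈ interior A) (h : ∀ x ∈ A, segment ℝ p x ⊆ A) :
    ∀ x ∈ interior A, segment ℝ p x ⊆ interior A := by
  intro x hx y hy
  obtain ⟨u, v, hu, hv, huv, rfl⟩ := hy
  rcases eq_or_lt_of_le hv with h0 | hvpos
  · have hu1 : u = 1 := by linarith
    rw [hu1, ← h0, one_smul, zero_smul, add_zero]
    exact hp
  · set f : E ≃ₜ E :=
      (Homeomorph.smulOfNeZero v hvpos.ne').trans (Homeomorph.addLeft (u • p)) with hf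
    have hopen : IsOpen (f '' interior A) := f.isOpenMap _ isOpen_interior
    have hsub : f '' interior A ⊆ A := by
      rintro _ ⟨z, hz, rfl⟩
      have hfz : f z = u • p + v • z := rfl
      rw [hfz]
      exact h z (interior_subset hz) ⟨u, v, hu, hv, huv, rfl⟩
    have : u • p + v • x ∈ f '' interior A := ⟨x, hx, rfl⟩
    exact interior_maximal hsub hopen this

lemma coord_squeeze {aN bN L : ℕ} {P X YY u v : ℝ}
    (hab : aN ≤ bN) (hP : P = ((aN : ℝ) + 1/2) / 2 ^ L)
    (hx1 : (bN : ℝ) / 2 ^ L ≤ X) (hx2 : X ≤ ((bN : ℝ) + 1) / 2 ^ L)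
    (hu : 0 ≤ u) (hv : 0 ≤ v) (huv : u + v = 1) (hYY : YY = u * P + v * X) :
    ((max aN (min bN ⌊YY * 2 ^ L⌋₊) : ℕ) : ℝ) / 2 ^ L ≤ YY ∧
      YY ≤ (((max aN (min bN ⌊YY * 2 ^ L⌋₊) : ℕ) : ℝ) + 1) / 2 ^ L ∧
      aN ≤ max aN (min bN ⌊YY * 2 ^ L⌋₊) ∧ max aN (min bN ⌊YY * 2 ^ L⌋₊) ≤ bN := by
  have hL : (0 : ℝ) < 2 ^ L := by positivity
  have habR : (aN : ℝ) ≤ bN := Nat.cast_le.mpr hab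
  have hP1 : (aN : ℝ) / 2 ^ L ≤ P := by rw [hP]; gcongr; linarith
  have hP2 : P ≤ ((bN : ℝ) + 1) / 2 ^ L := by rw [hP]; gcongr; linarith
  have hx1' : (aN : ℝ) / 2 ^ L ≤ X := le_trans (by gcongr) hx1
  have hy1 : (aN : ℝ) / 2 ^ L ≤ YY := by
    rw [hYY]
    have h1 := mul_le_mul_of_nonneg_left hP1 hu
    have h2 := mul_le_mul_of_nonneg_left hx1' hv
    have h3 : u * ((aN : ℝ) / 2 ^ L) + v * ((aN : ℝ) / 2 ^ L) = (aN : ℝ) / 2 ^ L := by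
      rw [← add_mul, huv, one_mul]
    linarith
  have hy2 : YY ≤ ((bN : ℝ) + 1) / 2 ^ L := by
    rw [hYY]
    have h1 := mul_le_mul_of_nonneg_left hP2 hu
    have h2 := mul_le_mul_of_nonneg_left hx2 hv
    have h3 : u * (((bN : ℝ) + 1) / 2 ^ L) + v * (((bN : ℝ) + 1) / 2 ^ L)
        = ((bN : ℝ) + 1) / 2 ^ L := by rw [← add_mul, huv, one_mul]
    linarith
  have hz1 : (aN : ℝ) ≤ YY * 2 ^ L := (div_le_iff₀ hL).mp hy1
  have hz2 : YY * 2 ^ L ≤ (bN : ℝ) + 1 := (le_div_iff₀ hL).mp hy2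
  have hz0 : 0 ≤ YY * 2 ^ L := le_trans (by positivity) hz1
  have hf1 : (⌊YY * 2 ^ L⌋₊ : ℝ) ≤ YY * 2 ^ L := Nat.floor_le hz0
  have hf2 : YY * 2 ^ L < ⌊YY * 2 ^ L⌋₊ + 1 := Nat.lt_floor_add_one _
  set f := ⌊YY * 2 ^ L⌋₊ with hfdef
  rcases le_or_gt f bN with hfb | hbf
  · have hmin : min bN f = f := min_eq_right hfb
    rw [hmin]
    have hk1 : ((max aN f : ℕ) : ℝ) ≤ YY * 2 ^ L := by
      rw [Nat.cast_max]
      exact max_le hz1 hf1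
    have hk2 : YY * 2 ^ L ≤ ((max aN f : ℕ) : ℝ) + 1 := by
      have : (f : ℝ) ≤ ((max aN f : ℕ) : ℝ) := Nat.cast_le.mpr (le_max_right _ _)
      linarith
    exact ⟨(div_le_iff₀ hL).mpr hk1, (le_div_iff₀ hL).mpr hk2, le_max_left _ _,
      max_le hab hfb⟩
  · have hmin : min bN f = bN := min_eq_left hbf.le
    have hmax : max aN bN = bN := max_eq_right hab
    rw [hmin, hmax]
    have hbz : (bN : ℝ) ≤ YY * 2 ^ L := by
      have : ((bN : ℕ) : ℝ) < f := by exact_mod_cast Nat.cast_lt.mpr hbf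
      linarith
    refine ⟨(div_le_iff₀ hL).mpr (by linarith), (le_div_iff₀ hL).mpr (by linarith),
      hab, le_refl _⟩

/-- If `Q ||| Qstart = Q` (bitwise or) for all `Q` in `{Qstart, …, Qend}`, then the
interior of `Y = ⋃_{Q=Qstart}^{Qend} Ω(Q)` is star-shaped. -/
theorem morton_or_union_starshaped (d L Qstart Qend : ℕ) (hd : 1 ≤ d)
    (hle : Qstart ≤ Qend) (hQend : Qend < 2 ^ (d * L))
    (hor : ∀ Q, Qstart ≤ Q → Q ≤ Qend → Q ||| Qstart = Q) :
    StarShaped (interior (⋃ Q ∈ Set.Icc Qstart Qend, mortonOmega d L Q)) := by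
  have hL : (0 : ℝ) < 2 ^ L := by positivity
  set Y := ⋃ Q ∈ Set.Icc Qstart Qend, mortonOmega d L Q with hY
  set p : Fin d → ℝ :=
    fun r => ((mortonCoord d L ((r : ℕ) + 1) Qstart : ℝ) + 1/2) / 2 ^ L with hp
  have hQsI : Qstart ∈ Set.Icc Qstart Qend := ⟨le_refl _, hle⟩
  -- p is in the interior of Y
  have hpint : p ∈ interior Y := by
    set U : Set (Fin d → ℝ) := Set.univ.pi (fun r : Fin d =>
      Set.Ioo ((mortonCoord d L ((r : ℕ) + 1) Qstart : ℝ) / 2 ^ L)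
        (((mortonCoord d L ((r : ℕ) + 1) Qstart : ℝ) + 1) / 2 ^ L)) with hU
    have hUopen : IsOpen U := isOpen_set_pi Set.finite_univ (fun r _ => isOpen_Ioo)
    have hUsub : U ⊆ Y := by
      intro x hxU
      refine Set.mem_biUnion hQsI ?_
      intro r
      have h := hxU r (Set.mem_univ r)
      exact ⟨h.1.le, h.2.le⟩
    have hpU : p ∈ U := by
      intro r _
      have hpr : p r = ((mortonCoord d L ((r : ℕ) + 1) Qstart : ℝ) + 1/2) / 2 ^ L := rfl
      constructor
      · rw [hpr]; gcongr ?_ / _; linarith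
      · rw [hpr]; gcongr ?_ / _; linarith
    exact interior_maximal hUsub hUopen hpU
  -- Y is star-shaped with respect to p
  have key : ∀ x ∈ Y, segment ℝ p x ⊆ Y := by
    rintro x hx w hw
    rw [hY] at hx
    simp only [Set.mem_iUnion, exists_prop] at hx
    obtain ⟨Q, hQ, hxQ⟩ := hx
    obtain ⟨u, v, hu, hv, huv, rfl⟩ := hw
    have hor' := hor Q hQ.1 hQ.2
    have hab : ∀ r : ℕ, mortonCoord d L (r + 1) Qstart ≤ mortonCoord d L (r + 1) Q :=
      fun r => mortonCoord_le_of_or hor'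
    have hblt : ∀ r : ℕ, mortonCoord d L (r + 1) Q < 2 ^ L :=
      fun r => mortonCoord_lt d L _ Q
    -- per-coordinate squeeze
    have hsq : ∀ r : Fin d,
        ((max (mortonCoord d L ((r : ℕ) + 1) Qstart)
          (min (mortonCoord d L ((r : ℕ) + 1) Q)
            ⌊(u • p + v • x) r * 2 ^ L⌋₊) : ℕ) : ℝ) / 2 ^ L ≤ (u • p + v • x) r ∧
        (u • p + v • x) r ≤ (((max (mortonCoord d L ((r : ℕ) + 1) Qstart)
          (min (mortonCoord d L ((r : ℕ) + 1) Q)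
            ⌊(u • p + v • x) r * 2 ^ L⌋₊) : ℕ) : ℝ) + 1) / 2 ^ L ∧
        mortonCoord d L ((r : ℕ) + 1) Qstart ≤
          max (mortonCoord d L ((r : ℕ) + 1) Qstart)
            (min (mortonCoord d L ((r : ℕ) + 1) Q) ⌊(u • p + v • x) r * 2 ^ L⌋₊) ∧
        max (mortonCoord d L ((r : ℕ) + 1) Qstart)
            (min (mortonCoord d L ((r : ℕ) + 1) Q) ⌊(u • p + v • x) r * 2 ^ L⌋₊) ≤
          mortonCoord d L ((r : ℕ) + 1) Q := by
      intro r
      exact coord_squeeze (P := p r) (X := x r) (hab (r : ℕ)) rfl (hxQ r).1 (hxQ r).2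
        hu hv huv rfl
    -- the quadrant containing the point
    set k : ℕ → ℕ := fun r => if h : r < d then
      max (mortonCoord d L (r + 1) Qstart)
        (min (mortonCoord d L (r + 1) Q) ⌊(u • p + v • x) ⟨r, h⟩ * 2 ^ L⌋₊) else 0 with hk
    have hkval : ∀ r : Fin d, k (r : ℕ) =
        max (mortonCoord d L ((r : ℕ) + 1) Qstart)
          (min (mortonCoord d L ((r : ℕ) + 1) Q) ⌊(u • p + v • x) r * 2 ^ L⌋₊) := by
      intro r
      rw [hk]
      simp only [dif_pos r.isLt, Fin.eta]
    have hka : ∀ r, r < d → mortonCoord d L (r + 1) Qstart ≤ k r := by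
      intro r hr
      have := (hsq ⟨r, hr⟩).2.2.1
      rwa [← hkval ⟨r, hr⟩] at this
    have hkb : ∀ r, r < d → k r ≤ mortonCoord d L (r + 1) Q := by
      intro r hr
      have := (hsq ⟨r, hr⟩).2.2.2
      rwa [← hkval ⟨r, hr⟩] at this
    have hklt : ∀ r, r < d → k r < 2 ^ L := fun r hr => lt_of_le_of_lt (hkb r hr) (hblt r)
    have hQlt : Q < 2 ^ (L * d) := by rw [mul_comm]; exact lt_of_le_of_lt hQ.2 hQend
    have hQslt : Qstart < 2 ^ (L * d) := by
      rw [mul_comm]; exact lt_of_le_of_lt hle hQend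
    have hK1 : Qstart ≤ mEnc d L k := by
      conv_lhs => rw [← mEnc_coords_self hd hQslt]
      exact mEnc_mono hd hka hklt
    have hK2 : mEnc d L k ≤ Q := by
      conv_rhs => rw [← mEnc_coords_self hd hQlt]
      exact mEnc_mono hd hkb (fun r hr => hblt r)
    refine Set.mem_biUnion (show mEnc d L k ∈ Set.Icc Qstart Qend from
      ⟨hK1, le_trans hK2 hQ.2⟩) ?_
    intro r
    have hco : mortonCoord d L ((r : ℕ) + 1) (mEnc d L k) = k (r : ℕ) := by
      rw [mEnc_coord hd k r.isLt, Nat.mod_eq_of_lt (hklt _ r.isLt)]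
    rw [hco, hkval r]
    exact ⟨(hsq r).1, (hsq r).2.1⟩
  exact ⟨p, hpint, star_interior hpint key⟩
end
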